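/- arXiv:2106.13395 — 5 statements merged into one kernel-verified Lean document; each statement's English description precedes it below -/
import Mathlib

section
/- Suppose a semivaluation v on R = ⊕_{α∈Λ} R_α is T(K)-invariant, where K is an algebraically closed field. Then for every f = f_{α_1} + ... + f_{α_k} with nonzero homogeneous components, v(f) = min_{1≤j≤k} v(f_{α_j}). (Key step: for generic a_1,...,a_k ∈ T(K), the k×k matrix A with entries A_{ij} = a_i^{α_j} is invertible, so each f_{α_i} is a K-linear combination of the translates a_j·f.) -/
/-!
Twisting `f` by a character `a` and subtracting `a^β f` kills the `β`-component of `f` and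
multiplies every other component `f_γ` by the scalar `a^γ - a^β`. By invariance and the
ultrametric inequality this does not decrease `v`. In characteristic zero the characters of `ℤ^r`
separate degrees, so repeating the step isolates any component `f_α` up to a nonzero scalar,
whence `v f ≤ v f_α`; the reverse inequality `min_α v f_α ≤ v f` is the ultrametric inequality.
-/

open DirectSum

theorem exists_monoidHom_apply_ofAdd_ne {σ K : Type*} [Field K] [CharZero K] {α β : σ → ℤ}
    (h : α ≠ β) :
    ∃ a : Multiplicative (σ → ℤ) →* Kˣ, a (.ofAdd α) ≠ a (.ofAdd β) := by
  obtain ⟨i, hi⟩ := Function.ne_iff.mp h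
  refine ⟨(zpowersHom Kˣ (Units.mk0 2 two_ne_zero)).comp
    (AddMonoidHom.toMultiplicative (Pi.evalAddMonoidHom (fun _ => ℤ) i)), fun heq => hi ?_⟩
  have h2 : ((2 ^ α i : ℚ) : K) = ((2 ^ β i : ℚ) : K) := by
    simpa using congrArg Units.val heq
  exact zpow_right_injective₀ two_pos (by norm_num) (Rat.cast_injective h2)

namespace DirectSum

variable {ι K R : Type*} [DecidableEq ι] [Field K] [AddCommGroup R] [Module K R]
  (𝒜 : ι → Submodule K R) [Decomposition 𝒜] [∀ i (x : 𝒜 i), Decidable (x ≠ 0)]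

-- `twist 𝒜 (fun α => a ^ α) f` is the torus translate `a · f`.
def twist (χ : ι → K) (f : R) : R :=
  ∑ i ∈ (decompose 𝒜 f).support, χ i • (decompose 𝒜 f i : R)

theorem decompose_twist_apply (χ : ι → K) (f : R) (i : ι) :
    decompose 𝒜 (twist 𝒜 χ f) i = χ i • decompose 𝒜 f i := by
  simp only [twist, decompose_sum, decompose_smul, decompose_coe, DirectSum.sum_apply,
    DirectSum.smul_apply]
  have hoff : ∀ j ≠ i, χ j • of (fun i => 𝒜 i) j (decompose 𝒜 f j) i = 0 := fun j hji => by
    rw [of_eq_of_ne _ _ _ hji.symm, smul_zero]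
  by_cases hi : i ∈ (decompose 𝒜 f).support
  · rw [Finset.sum_eq_single_of_mem i hi (fun j _ => hoff j), of_eq_same]
  · rw [DFinsupp.notMem_support_iff.1 hi, smul_zero,
      Finset.sum_eq_zero (fun j hj => hoff j (by rintro rfl; exact hi hj))]

theorem decompose_twist_sub_smul_apply (χ : ι → K) (c : K) (f : R) (i : ι) :
    decompose 𝒜 (twist 𝒜 χ f - c • f) i = (χ i - c) • decompose 𝒜 f i := by
  rw [decompose_sub, decompose_smul, DFinsupp.sub_apply, DirectSum.smul_apply,
    decompose_twist_apply, sub_smul]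

theorem mem_support_decompose_twist_sub_smul {χ : ι → K} {c : K} {f : R} {i : ι} :
    i ∈ (decompose 𝒜 (twist 𝒜 χ f - c • f)).support ↔
      i ∈ (decompose 𝒜 f).support ∧ χ i ≠ c := by
  simp only [DFinsupp.mem_support_iff, decompose_twist_sub_smul_apply, ne_eq, smul_eq_zero,
    sub_eq_zero, not_or]
  exact and_comm

end DirectSum

namespace AddValuation

variable {K R Γ₀ : Type*} [Field K] [CommRing R] [Algebra K R]
  [LinearOrderedAddCommMonoidWithTop Γ₀] (v : AddValuation R Γ₀)

theorem map_smul_of_ne_zero (hK : ∀ c : K, c ≠ 0 → v (algebraMap K R c) = 0) {c : K}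
    (hc : c ≠ 0) (x : R) : v (c • x) = v x := by
  rw [Algebra.smul_def, v.map_mul, hK c hc, zero_add]

theorem le_map_smul (hK : ∀ c : K, c ≠ 0 → v (algebraMap K R c) = 0) (c : K) (x : R) :
    v x ≤ v (c • x) := by
  rcases eq_or_ne c 0 with rfl | hc
  · rw [zero_smul, v.map_zero]
    exact le_top
  · exact (v.map_smul_of_ne_zero hK hc x).ge

variable {ι : Type*} [DecidableEq ι] (𝒜 : ι → Submodule K R) [Decomposition 𝒜]
  [∀ i (x : 𝒜 i), Decidable (x ≠ 0)]

theorem le_map_decompose_of_map_twist (hK : ∀ c : K, c ≠ 0 → v (algebraMap K R c) = 0)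
    (X : Set (ι → K)) (hsep : ∀ i j, i ≠ j → ∃ χ ∈ X, χ i ≠ χ j)
    (hX : ∀ χ ∈ X, ∀ f, v (twist 𝒜 χ f) = v f) (f : R) {i : ι}
    (hi : i ∈ (decompose 𝒜 f).support) : v f ≤ v (decompose 𝒜 f i) := by
  induction hn : (decompose 𝒜 f).support.card using Nat.strong_induction_on generalizing f with
  | _ n ih =>
  by_cases hsingle : (decompose 𝒜 f).support ⊆ {i}
  · have hsupp : (decompose 𝒜 f).support = {i} :=
      hsingle.antisymm (Finset.singleton_subset_iff.2 hi)
    conv_lhs => rw [← sum_support_decompose 𝒜 f, hsupp, Finset.sum_singleton]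
  obtain ⟨j, hj, hji⟩ : ∃ j ∈ (decompose 𝒜 f).support, j ≠ i := by
    simpa using Finset.not_subset.1 hsingle
  obtain ⟨χ, hχ, hne⟩ := hsep i j hji.symm
  set g := twist 𝒜 χ f - χ j • f
  have hfg : v f ≤ v g :=
    (le_min (hX χ hχ f).ge (v.le_map_smul hK _ f)).trans (v.map_sub _ _)
  have hcard : (decompose 𝒜 g).support.card < n := by
    refine hn ▸ (Finset.card_le_card fun k hk => ?_).trans_lt (Finset.card_erase_lt_of_mem hj)
    obtain ⟨hkf, hkj⟩ := (mem_support_decompose_twist_sub_smul 𝒜).1 hk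
    exact Finset.mem_erase.2 ⟨fun hkj' => hkj (congrArg χ hkj'), hkf⟩
  calc v f ≤ v g := hfg
    _ ≤ v (decompose 𝒜 g i) :=
      ih _ hcard g ((mem_support_decompose_twist_sub_smul 𝒜).2 ⟨hi, hne⟩) rfl
    _ = v (decompose 𝒜 f i) := by
      rw [decompose_twist_sub_smul_apply, Submodule.coe_smul,
        v.map_smul_of_ne_zero hK (sub_ne_zero.2 hne)]

end AddValuation

theorem torus_invariant_semivaluation_eq_min_general
    {K : Type*} [Field K] [CharZero K]
    {R : Type*} [CommRing R] [Algebra K R]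
    {r : ℕ}
    (𝒜 : (Fin r → ℤ) → Submodule K R) [GradedAlgebra 𝒜]
    [∀ (α : Fin r → ℤ) (x : 𝒜 α), Decidable (x ≠ 0)]
    (v : R → WithTop ℝ)
    (hmul : ∀ f g : R, v (f * g) = v f + v g)
    (hadd : ∀ f g : R, min (v f) (v g) ≤ v (f + g))
    (hzero : v 0 = ⊤)
    (htriv : ∀ c : K, c ≠ 0 → v (algebraMap K R c) = 0)
    (hinv : ∀ (a : Multiplicative (Fin r → ℤ) →* Kˣ) (f : R),
      v (∑ α ∈ (DirectSum.decompose 𝒜 f).support,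
          ((a (Multiplicative.ofAdd α) : Kˣ) : K) • ((DirectSum.decompose 𝒜 f α : R)))
        = v f)
    (f : R) :
    v f = (DirectSum.decompose 𝒜 f).support.inf
        (fun α => v ((DirectSum.decompose 𝒜 f α : R))) := by
  have hone : v 1 = 0 := by simpa using htriv 1 one_ne_zero
  let w := AddValuation.of v hzero hone hadd hmul
  let X := Set.range fun (a : Multiplicative (Fin r → ℤ) →* Kˣ) α => (a (.ofAdd α) : K)
  have hsep : ∀ α β, α ≠ β → ∃ χ ∈ X, χ α ≠ χ β := fun α β hαβ => by
    obtain ⟨a, ha⟩ := exists_monoidHom_apply_ofAdd_ne (K := K) hαβ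
    exact ⟨_, ⟨a, rfl⟩, fun h => ha (Units.ext h)⟩
  have hX : ∀ χ ∈ X, ∀ f, w (twist 𝒜 χ f) = w f := by
    rintro _ ⟨a, rfl⟩ f
    exact hinv a f
  refine le_antisymm (Finset.le_inf fun α hα => ?_) ?_
  · exact w.le_map_decompose_of_map_twist 𝒜 htriv X hsep hX f hα
  · calc (decompose 𝒜 f).support.inf (fun α => w (decompose 𝒜 f α))
      _ ≤ w (∑ α ∈ (decompose 𝒜 f).support, (decompose 𝒜 f α : R)) :=
          w.map_le_sum fun α hα => Finset.inf_le hα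
      _ = v f := congrArg v (sum_support_decompose 𝒜 f)

/-- Over an algebraically closed field, a semivaluation on a ring
graded by the lattice `M = ℤ^r` which is invariant under the torus action
`(a·v)(f) = v (Σ_α a^α f_α)` for all characters `a : M → Kˣ` satisfies
`v f = min_α v (f_α)`. -/
theorem torus_invariant_semivaluation_eq_min
    {K : Type*} [Field K] [IsAlgClosed K] [CharZero K]
    {R : Type*} [CommRing R] [Algebra K R]
    {r : ℕ}
    (𝒜 : (Fin r → ℤ) → Submodule K R) [GradedAlgebra 𝒜]
    [∀ (α : Fin r → ℤ) (x : 𝒜 α), Decidable (x ≠ 0)]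
    (v : R → WithTop ℝ)
    (hmul : ∀ f g : R, v (f * g) = v f + v g)
    (hadd : ∀ f g : R, min (v f) (v g) ≤ v (f + g))
    (hzero : v 0 = ⊤)
    (htriv : ∀ c : K, c ≠ 0 → v (algebraMap K R c) = 0)
    (hinv : ∀ (a : Multiplicative (Fin r → ℤ) →* Kˣ) (f : R),
      v (∑ α ∈ (DirectSum.decompose 𝒜 f).support,
          ((a (Multiplicative.ofAdd α) : Kˣ) : K) • ((DirectSum.decompose 𝒜 f α : R)))
        = v f)
    (f : R) :
    v f = (DirectSum.decompose 𝒜 f).support.inf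
        (fun α => v ((DirectSum.decompose 𝒜 f α : R))) :=
  torus_invariant_semivaluation_eq_min_general 𝒜 v hmul hadd hzero htriv hinv f
end

section
/- Let N_t agree for t ≫ 0 with a polynomial of degree n-1 with leading coefficient V/(n-1)!, and let S̃_t → S̃ be bounded. Then lim_{m→∞} (1/m^{n+1}) Σ_{t=0}^{∞} e^{-t/m} t N_t S̃_t = V·n·S̃ = (n+1)·V·S, where S = (n/(n+1))S̃. -/
/-!
Put `x = e^{-1/m}`, so the sum is the power series `∑ g_t x^t` with `g_t = t N_t S̃_t`, taken as
`x → 1⁻`. Both `t N_t` and `n! C(t+n, n) = (t+1)⋯(t+n)` are eventually polynomials in `t` of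
degree at most `n`, with `t^n`-coefficients `V/(n-1)!` and `1`, so `g_t / C(t+n, n) → V n S̃`.
The comparison series sums to `∑ C(t+n, n) x^t = (1 - x)^{-(n+1)} ~ m^{n+1}`, which diverges, and
by the Abelian theorem for power series with a divergent positive comparison series,
`∑ g_t x^t = (V n S̃ + o(1)) m^{n+1}`.
-/

open Filter Polynomial Topology Asymptotics

namespace Polynomial

theorem tendsto_eval_div_pow_of_natDegree_le {𝕜 : Type*} [NormedField 𝕜] [LinearOrder 𝕜]
    [IsStrictOrderedRing 𝕜] [OrderTopology 𝕜] {P : 𝕜[X]} {d : ℕ} (hP : P.natDegree ≤ d) :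
    Tendsto (fun x => P.eval x / x ^ d) atTop (𝓝 (P.coeff d)) := by
  set R := P - C (P.coeff d) * X ^ d
  have hR : R.degree < (X ^ d : 𝕜[X]).degree := by
    rw [degree_X_pow, degree_lt_iff_coeff_zero]
    intro k hk
    rcases hk.eq_or_lt with rfl | hk
    · simp [R]
    · simp [R, coeff_eq_zero_of_natDegree_lt (hP.trans_lt hk), coeff_X_pow, hk.ne']
  have hlim := (div_tendsto_atTop_zero_of_degree_lt R _ hR).add_const (P.coeff d)
  rw [zero_add] at hlim
  refine hlim.congr' ?_
  filter_upwards [eventually_gt_atTop 0] with x hx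
  simp [R, sub_div, hx.ne']

end Polynomial

theorem choose_add_mul_factorial_eq_eval_ascPochhammer (t n : ℕ) :
    ((t + n).choose n : ℝ) * n.factorial = (ascPochhammer ℝ n).eval ((t : ℝ) + 1) := by
  rw [← Nat.cast_add_one, ← ascPochhammer_eval_cast, ascPochhammer_nat_eq_ascFactorial,
    Nat.ascFactorial_eq_factorial_mul_choose]
  push_cast
  ring

theorem tendsto_eval_div_choose_add {P : ℝ[X]} {n : ℕ} (hP : P.natDegree ≤ n) :
    Tendsto (fun t : ℕ => P.eval (t : ℝ) / (t + n).choose n) atTop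
      (𝓝 (n.factorial * P.coeff n)) := by
  set Q : ℝ[X] := (ascPochhammer ℝ n).comp (X + C 1)
  have hQ : Q.Monic := (monic_ascPochhammer ℝ n).comp_X_add_C 1
  have hQdeg : Q.natDegree = n := by
    rw [natDegree_comp, ascPochhammer_natDegree, natDegree_X_add_C, mul_one]
  have hQn : Q.coeff n = 1 := hQdeg ▸ hQ.coeff_natDegree
  have hlim := ((tendsto_eval_div_pow_of_natDegree_le hP).div
    (tendsto_eval_div_pow_of_natDegree_le hQdeg.le) (hQn ▸ one_ne_zero)).const_mul
      (n.factorial : ℝ)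
  rw [hQn, div_one] at hlim
  refine (hlim.comp tendsto_natCast_atTop_atTop).congr' ?_
  filter_upwards [eventually_gt_atTop 0] with t ht
  have hc := choose_add_mul_factorial_eq_eval_ascPochhammer t n
  have ht' : (t : ℝ) ≠ 0 := by positivity
  have hc0 : ((t + n).choose n : ℝ) ≠ 0 := Nat.cast_ne_zero.2 (Nat.choose_pos (by omega)).ne'
  simp only [Function.comp_apply, Pi.div_apply, Q, eval_comp, eval_add, eval_X, eval_C, ← hc]
  field_simp

theorem tendsto_natCast_mul_one_sub_exp_neg_inv :
    Tendsto (fun m : ℕ => (m : ℝ) * (1 - Real.exp (-1 / m))) atTop (𝓝 1) := by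
  have hslope := (Real.hasDerivAt_exp 0).tendsto_slope_zero_left
  have hlim : Tendsto (fun m : ℕ => -1 / (m : ℝ)) atTop (𝓝[<] 0) := by
    refine tendsto_nhdsWithin_iff.2 ⟨tendsto_const_div_atTop_nhds_zero_nat (-1), ?_⟩
    filter_upwards [eventually_gt_atTop 0] with m hm
    simp [neg_div, hm]
  refine ((hslope.comp hlim).congr' ?_).trans (by simp)
  filter_upwards [eventually_gt_atTop 0] with m hm
  simp only [Function.comp_apply, zero_add, Real.exp_zero, smul_eq_mul]
  field_simp
  ring

section Abelian

variable {ι : Type*} {l : Filter ι} {c : ℕ → ℝ} {x : ι → ℝ}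

theorem isLittleO_tsum_mul_pow {u : ℕ → ℝ} (hc : ∀ t, 0 ≤ c t) (hu : u =o[atTop] c)
    (hx : ∀ᶠ i in l, x i ∈ Set.Icc 0 1) (hcs : ∀ᶠ i in l, Summable fun t => c t * x i ^ t)
    (hD : Tendsto (fun i => ∑' t, c t * x i ^ t) l atTop) :
    (fun i => ∑' t, u t * x i ^ t) =o[l] fun i => ∑' t, c t * x i ^ t := by
  refine isLittleO_iff.2 fun ε hε => ?_
  obtain ⟨T, hT⟩ := eventually_atTop.1 (hu.bound (half_pos hε))
  set K := ∑ t ∈ Finset.range T, ‖u t‖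
  filter_upwards [hx, hcs, hD.eventually_ge_atTop (2 * K / ε)] with i ⟨hx0, hx1⟩ hsum hK
  have hhead : HasSum (fun t => if t < T then ‖u t‖ else 0) K := by
    have : HasSum (fun t => if t < T then ‖u t‖ else 0)
        (∑ t ∈ Finset.range T, if t < T then ‖u t‖ else 0) :=
      hasSum_sum_of_ne_finset_zero fun t ht => if_neg (by simpa using ht)
    rwa [Finset.sum_congr rfl fun t ht => if_pos (Finset.mem_range.1 ht)] at this
  have hbound (t : ℕ) :
      ‖u t * x i ^ t‖ ≤ (if t < T then ‖u t‖ else 0) + ε / 2 * (c t * x i ^ t) := by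
    have hxt : 0 ≤ x i ^ t := pow_nonneg hx0 t
    rw [norm_mul, Real.norm_of_nonneg hxt]
    split_ifs with ht
    · have := mul_le_of_le_one_right (norm_nonneg (u t)) (pow_le_one₀ hx0 hx1 (n := t))
      have : 0 ≤ ε / 2 * (c t * x i ^ t) := by have := hc t; positivity
      linarith
    · have := hT t (not_lt.1 ht)
      rw [Real.norm_of_nonneg (hc t)] at this
      linarith [mul_le_mul_of_nonneg_right this hxt]
  have hDnonneg : 0 ≤ ∑' t, c t * x i ^ t :=
    tsum_nonneg fun t => mul_nonneg (hc t) (pow_nonneg hx0 t)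
  rw [Real.norm_of_nonneg hDnonneg]
  calc ‖∑' t, u t * x i ^ t‖ ≤ K + ε / 2 * ∑' t, c t * x i ^ t :=
        tsum_of_norm_bounded (hhead.add (hsum.hasSum.mul_left _)) hbound
    _ ≤ ε * ∑' t, c t * x i ^ t := by
        rw [div_le_iff₀ hε] at hK
        linarith

theorem tendsto_tsum_mul_pow_div_tsum {g : ℕ → ℝ} {L : ℝ} (hc : ∀ t, 0 < c t)
    (hg : Tendsto (fun t => g t / c t) atTop (𝓝 L)) (hx : ∀ᶠ i in l, x i ∈ Set.Icc 0 1)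
    (hcs : ∀ᶠ i in l, Summable fun t => c t * x i ^ t)
    (hD : Tendsto (fun i => ∑' t, c t * x i ^ t) l atTop) :
    Tendsto (fun i => (∑' t, g t * x i ^ t) / ∑' t, c t * x i ^ t) l (𝓝 L) := by
  set u := fun t => g t - L * c t
  have hu : u =o[atTop] c := by
    refine (isLittleO_iff_tendsto' (.of_forall fun t ht => absurd ht (hc t).ne')).2 ?_
    refine ((hg.sub_const L).congr fun t => ?_).trans (by rw [sub_self])
    simp [u, sub_div, (hc t).ne']
  have hlim :=
    ((isLittleO_tsum_mul_pow (fun t => (hc t).le) hu hx hcs hD).tendsto_div_nhds_zero).add_const L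
  rw [zero_add] at hlim
  refine hlim.congr' ?_
  filter_upwards [hcs, hD.eventually_gt_atTop 0] with i hsum hpos
  have hus : Summable fun t => u t * x i ^ t :=
    summable_of_isBigO_nat hsum (hu.isBigO.mul (isBigO_refl _ _))
  have hsplit : ∑' t, g t * x i ^ t = ∑' t, u t * x i ^ t + L * ∑' t, c t * x i ^ t := by
    rw [← tsum_mul_left, ← hus.tsum_add (hsum.mul_left L)]
    exact tsum_congr fun t => by simp only [u]; ring
  rw [hsplit, add_div, mul_div_cancel_right₀ _ hpos.ne']

end Abelian

theorem hasSum_choose_mul_exp_neg_inv_pow (n : ℕ) {m : ℕ} (hm : 0 < m) :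
    HasSum (fun t : ℕ => ((t + n).choose n : ℝ) * Real.exp (-1 / m) ^ t)
      (1 / (1 - Real.exp (-1 / m)) ^ (n + 1)) := by
  refine hasSum_choose_mul_geometric_of_norm_lt_one n ?_
  rw [Real.norm_of_nonneg (Real.exp_nonneg _), Real.exp_lt_one_iff]
  have : (0 : ℝ) < m := Nat.cast_pos.2 hm
  simpa [neg_div] using this

theorem tendsto_tsum_choose_mul_exp_neg_inv_pow_div_pow (n : ℕ) :
    Tendsto (fun m : ℕ => (∑' t : ℕ, ((t + n).choose n : ℝ) * Real.exp (-1 / m) ^ t) /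
      (m : ℝ) ^ (n + 1)) atTop (𝓝 1) := by
  have hlim := (tendsto_natCast_mul_one_sub_exp_neg_inv.pow (n + 1)).inv₀ (by norm_num)
  rw [one_pow, inv_one] at hlim
  refine hlim.congr' ?_
  filter_upwards [eventually_gt_atTop 0] with m hm
  rw [(hasSum_choose_mul_exp_neg_inv_pow n hm).tsum_eq, mul_pow]
  field_simp

theorem tendsto_tsum_exp_neg_div_mul_div_pow {g : ℕ → ℝ} {L : ℝ} (n : ℕ)
    (hg : Tendsto (fun t : ℕ => g t / (t + n).choose n) atTop (𝓝 L)) :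
    Tendsto (fun m : ℕ => 1 / (m : ℝ) ^ (n + 1) * ∑' t : ℕ, Real.exp (-(t : ℝ) / m) * g t)
      atTop (𝓝 L) := by
  set c : ℕ → ℝ := fun t => ((t + n).choose n : ℝ)
  set x : ℕ → ℝ := fun m => Real.exp (-1 / m)
  have hc (t : ℕ) : 0 < c t := Nat.cast_pos.2 (Nat.choose_pos (by omega))
  have hx : ∀ᶠ m in atTop, x m ∈ Set.Icc 0 1 := .of_forall fun m =>
    ⟨Real.exp_nonneg _,
      Real.exp_le_one_iff.2 (div_nonpos_of_nonpos_of_nonneg (by norm_num) m.cast_nonneg)⟩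
  have hcs : ∀ᶠ m in atTop, Summable fun t => c t * x m ^ t := by
    filter_upwards [eventually_gt_atTop 0] with m hm
    exact (hasSum_choose_mul_exp_neg_inv_pow n hm).summable
  have hnorm : Tendsto (fun m : ℕ => (∑' t, c t * x m ^ t) / (m : ℝ) ^ (n + 1)) atTop (𝓝 1) :=
    tendsto_tsum_choose_mul_exp_neg_inv_pow_div_pow n
  have hD : Tendsto (fun m => ∑' t, c t * x m ^ t) atTop atTop := by
    refine (hnorm.pos_mul_atTop one_pos
      ((tendsto_pow_atTop (n := n + 1) (by omega)).comp tendsto_natCast_atTop_atTop)).congr' ?_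
    filter_upwards [eventually_gt_atTop 0] with m hm
    exact div_mul_cancel₀ _ (pow_ne_zero _ (Nat.cast_ne_zero.2 hm.ne'))
  rw [← mul_one L]
  refine ((tendsto_tsum_mul_pow_div_tsum hc hg hx hcs hD).mul hnorm).congr' ?_
  filter_upwards [hD.eventually_gt_atTop 0] with m hm
  have hexp (t : ℕ) : Real.exp (-(t : ℝ) / m) = x m ^ t := by
    rw [← Real.exp_nat_mul]; ring_nf
  simp only [hexp, div_mul_div_cancel₀ hm.ne', one_div_mul_eq_div]
  congr 1
  exact tsum_congr fun t => by ring

theorem exp_weighted_jumping_number_limit_general (n : ℕ) (hn : 1 ≤ n) (V : ℝ)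
    (P : Polynomial ℝ) (hdeg : P.natDegree ≤ n - 1)
    (hlead : P.coeff (n - 1) = V / (n - 1).factorial)
    (N : ℕ → ℕ)
    (hNP : ∀ᶠ t : ℕ in atTop, (N t : ℝ) = P.eval (t : ℝ))
    (St : ℕ → ℝ) (S : ℝ)
    (hSconv : Tendsto St atTop (nhds S)) :
    Tendsto (fun m : ℕ =>
        (1 / (m : ℝ) ^ (n + 1)) *
          ∑' t : ℕ, Real.exp (-(t : ℝ) / (m : ℝ)) * (t : ℝ) * (N t : ℝ) * St t)
      atTop (nhds (V * n * S)) := by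
  obtain ⟨k, rfl⟩ := Nat.exists_eq_add_of_le' hn
  rw [Nat.add_sub_cancel] at hdeg hlead
  have hXP : (X * P).natDegree ≤ k + 1 := natDegree_mul_le.trans (by rw [natDegree_X]; omega)
  have hcoeff : ((k + 1).factorial : ℝ) * (X * P).coeff (k + 1) = V * ↑(k + 1) := by
    rw [coeff_X_mul, hlead, Nat.factorial_succ]
    push_cast
    field_simp
  have hratio : Tendsto (fun t : ℕ => t * N t * St t / (t + (k + 1)).choose (k + 1)) atTop
      (𝓝 (V * ↑(k + 1) * S)) := by
    rw [← hcoeff]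
    refine ((tendsto_eval_div_choose_add hXP).mul hSconv).congr' ?_
    filter_upwards [hNP] with t ht
    simp only [eval_mul, eval_X, ht]
    ring
  refine (tendsto_tsum_exp_neg_div_mul_div_pow (k + 1) hratio).congr fun m => ?_
  simp only [mul_assoc]

/-- If `N_t` agrees for `t ≫ 0` with a polynomial of degree `n-1`
with leading coefficient `V/(n-1)!`, and `S̃_t → S̃` is bounded, then
`lim_{m→∞} (1/m^{n+1}) Σ_{t=0}^∞ e^{-t/m} t N_t S̃_t = V·n·S̃`. -/
theorem exp_weighted_jumping_number_limit (n : ℕ) (hn : 1 ≤ n) (V : ℝ) (hV : 0 < V)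
    (P : Polynomial ℝ) (hdeg : P.natDegree ≤ n - 1)
    (hlead : P.coeff (n - 1) = V / (n - 1).factorial)
    (N : ℕ → ℕ) (hNpos : ∀ t, 0 < N t)
    (hNP : ∀ᶠ t : ℕ in atTop, (N t : ℝ) = P.eval (t : ℝ))
    (St : ℕ → ℝ) (S : ℝ) (hSbdd : ∃ C : ℝ, ∀ t, |St t| ≤ C)
    (hSconv : Tendsto St atTop (nhds S)) :
    Tendsto (fun m : ℕ =>
        (1 / (m : ℝ) ^ (n + 1)) *
          ∑' t : ℕ, Real.exp (-(t : ℝ) / (m : ℝ)) * (t : ℝ) * (N t : ℝ) * St t)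
      atTop (nhds (V * n * S)) :=
  exp_weighted_jumping_number_limit_general n hn V P hdeg hlead N hNP St S hSconv
end

section
/- Let σ ⊂ N_R ≅ R^n be a rational polyhedral cone, ξ ∈ int(σ), and set Q_ξ = {u ∈ σ^∨ : ⟨u,ξ⟩ ≤ 1}. Let e_1,...,e_n ∈ σ be a basis of N_R with determinant 1, and ι: M_R → R^n the map u ↦ (⟨u,e_1⟩,...,⟨u,e_n⟩). Then the Okounkov body Δ of the toric variety X = Spec(⊕_{u∈σ^∨∩M} C·χ^u) with respect to the valuation ν(Σ a_u χ^u) = min_u ι(u) equals ι(Q_ξ). In particular, Δ = closure of ∪_m (1/m)Conv(ι(mQ_ξ ∩ M)) = ι(Q_ξ). -/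
open Set Pointwise

noncomputable section

/-- The standard pairing on `ℝ^n`. -/
def pairing {n : ℕ} (u v : Fin n → ℝ) : ℝ := ∑ i, u i * v i

/-- The dual cone of `σ ⊆ N_ℝ = ℝ^n` inside `M_ℝ = ℝ^n`. -/
def dualCone {n : ℕ} (σ : Set (Fin n → ℝ)) : Set (Fin n → ℝ) :=
  {u | ∀ v ∈ σ, 0 ≤ pairing u v}

/-- Lattice points of `ℝ^n` (the image of `ℤ^n`). -/
def isLatticePoint {n : ℕ} (u : Fin n → ℝ) : Prop :=
  ∃ w : Fin n → ℤ, u = fun i => (w i : ℝ)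

/-!
Each `(1/m) Conv(ι(mQ_ξ ∩ M))` lies in the convex set `ι(Q_ξ)`, which is closed because
`ξ ∈ int σ` makes `Q_ξ` bounded; hence `Δ ⊆ ι(Q_ξ)`. Conversely, if `u ∈ Q_ξ` is rational with
common denominator `d`, then `du ∈ dQ_ξ ∩ M`, so `ι u` lies in the union; and rational points are
dense in `Q_ξ`. For the density, shrink `u` towards `0` into the open set `{⟨u, ξ⟩ < 1}`, then
approximate inside the rational polyhedral cone `σ^∨`: the orthogonal projection onto the
complement of the inequalities tight at a point `x` is a rational matrix fixing `x`, so it sends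
nearby rational points to rational points satisfying the tight inequalities with equality, while
the slack ones persist by continuity.
-/

open Matrix Filter Topology

def ratPoints (ι : Type*) : Set (ι → ℝ) := range fun q : ι → ℚ => fun i => (q i : ℝ)

theorem dense_ratPoints (ι : Type*) : Dense (ratPoints ι) :=
  DenseRange.piMap fun _ => Rat.denseRange_cast

section RationalCone

variable {ι : Type*} [Fintype ι]

theorem isUnit_det_mul_transpose_of_linearIndependent {K : Type*} [Field K] [LinearOrder K]
    [IsStrictOrderedRing K] {m : Type*} [Fintype m] [DecidableEq m]
    {A : Matrix m ι K} (hA : LinearIndependent K A.row) : IsUnit (A * Aᵀ).det := by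
  rw [isUnit_iff_ne_zero, Ne, ← exists_mulVec_eq_zero_iff]
  rintro ⟨c, hc, hAc⟩
  have hker : c ∈ LinearMap.ker (Aᵀ).mulVecLin := by
    rw [← ker_mulVecLin_transpose_mul_self, transpose_transpose]
    exact hAc
  rw [LinearMap.mem_ker, mulVecLin_apply, mulVec_transpose] at hker
  exact hc (funext (Fintype.linearIndependent_iff.mp hA c (by rwa [vecMul_eq_sum] at hker)))

theorem exists_rat_retraction (S : Set (ι → ℚ)) :
    ∃ P : Matrix ι ι ℚ, (∀ g ∈ S, g ᵥ* P = 0) ∧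
      ∀ x : ι → ℝ, (∀ g ∈ S, (fun i => (g i : ℝ)) ⬝ᵥ x = 0) → P.map (↑) *ᵥ x = x := by
  classical
  obtain ⟨b, hbS, hspan, hb⟩ := exists_linearIndependent ℚ S
  have : Fintype b := @Fintype.ofFinite _ hb.finite
  let A : Matrix b ι ℚ := of fun g => g.1
  have hG : IsUnit (A * Aᵀ).det := isUnit_det_mul_transpose_of_linearIndependent hb
  -- the orthogonal projection onto `Sᗮ`, written with a basis of `span ℚ S`, so it is rational
  refine ⟨1 - Aᵀ * (A * Aᵀ)⁻¹ * A, fun g hg => ?_, fun x hx => ?_⟩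
  · have hAP : A * (1 - Aᵀ * (A * Aᵀ)⁻¹ * A) = 0 := by
      rw [Matrix.mul_sub, Matrix.mul_one, ← Matrix.mul_assoc, ← Matrix.mul_assoc,
        mul_nonsing_inv _ hG, Matrix.one_mul, sub_self]
    have hb_ker : b ⊆ LinearMap.ker (1 - Aᵀ * (A * Aᵀ)⁻¹ * A).vecMulLinear := fun g hg =>
      congrFun hAP ⟨g, hg⟩
    exact Submodule.span_le.mpr hb_ker (hspan ▸ Submodule.subset_span hg)
  · have hAx : A.map (Rat.castHom ℝ) *ᵥ x = 0 := funext fun g => hx g (hbS g.2)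
    change (1 - Aᵀ * (A * Aᵀ)⁻¹ * A).map (Rat.castHom ℝ) *ᵥ x = x
    rw [Matrix.map_sub _ (map_sub _), Matrix.map_mul, Matrix.map_mul,
      Matrix.map_one _ (map_zero _) (map_one _), sub_mulVec, ← mulVec_mulVec, hAx, mulVec_zero,
      sub_zero, one_mulVec]

def ratDualCone (S : Set (ι → ℚ)) : Set (ι → ℝ) :=
  {x | ∀ g ∈ S, 0 ≤ (fun i => (g i : ℝ)) ⬝ᵥ x}

theorem ratDualCone_subset_closure_ratPoints_inter {S : Set (ι → ℚ)} (hS : S.Finite) :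
    ratDualCone S ⊆ closure (ratPoints ι ∩ ratDualCone S) := by
  intro x hx
  let tight := {g ∈ S | (fun i => (g i : ℝ)) ⬝ᵥ x = 0}
  obtain ⟨P, hPS, hPx⟩ := exists_rat_retraction tight
  let T : (ι → ℝ) → ι → ℝ := (P.map (↑) *ᵥ ·)
  have hT : Continuous T := continuous_const.matrix_mulVec continuous_id
  have hT_rat : T '' ratPoints ι ⊆
      ratPoints ι ∩ {y | ∀ g ∈ tight, (fun i => (g i : ℝ)) ⬝ᵥ y = 0} := by
    rintro _ ⟨_, ⟨q, rfl⟩, rfl⟩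
    have hTq : T (fun i => (q i : ℝ)) = fun i => ((P *ᵥ q) i : ℝ) :=
      funext fun i => (RingHom.map_mulVec (Rat.castHom ℝ) P q i).symm
    refine ⟨⟨P *ᵥ q, hTq.symm⟩, fun g hg => ?_⟩
    rw [hTq]
    refine (RingHom.map_dotProduct (Rat.castHom ℝ) g (P *ᵥ q)).symm.trans ?_
    rw [dotProduct_mulVec, hPS g hg, zero_dotProduct, map_zero]
  let slack := {y : ι → ℝ | ∀ g ∈ S \ tight, 0 < (fun i => (g i : ℝ)) ⬝ᵥ y}
  have hslack : IsOpen slack := by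
    simp only [slack, ofPred_forall]
    exact hS.sdiff.isOpen_biInter fun g _ =>
      isOpen_lt continuous_const (continuous_const.dotProduct continuous_id)
  have hx_slack : x ∈ slack := fun g hg => (hx g hg.1).lt_of_ne' fun h => hg.2 ⟨hg.1, h⟩
  have hx_closure : x ∈ closure (T '' ratPoints ι) := by
    rw [← hPx x fun g hg => hg.2]
    exact image_closure_subset_closure_image hT ⟨x, dense_ratPoints ι x, rfl⟩
  refine closure_mono ?_ (hslack.inter_closure ⟨hx_slack, hx_closure⟩)
  rintro y ⟨hy_slack, hy⟩
  obtain ⟨hy_rat, hy_tight⟩ := hT_rat hy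
  refine ⟨hy_rat, fun g hg => ?_⟩
  by_cases hg_tight : g ∈ tight
  · exact (hy_tight g hg_tight).ge
  · exact (hy_slack g ⟨hg, hg_tight⟩).le

end RationalCone

theorem pairing_eq_dotProduct {n : ℕ} (u v : Fin n → ℝ) : pairing u v = u ⬝ᵥ v := rfl

section DualCone

variable {n : ℕ} {σ : Set (Fin n → ℝ)} {ξ u : Fin n → ℝ}

theorem isClosed_dualCone (σ : Set (Fin n → ℝ)) : IsClosed (dualCone σ) := by
  simp only [dualCone, ofPred_forall]
  exact isClosed_biInter fun v _ =>
    isClosed_le continuous_const (continuous_id.dotProduct continuous_const)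

theorem smul_mem_dualCone {c : ℝ} (hc : 0 ≤ c) (hu : u ∈ dualCone σ) : c • u ∈ dualCone σ :=
  fun v hv => by
    rw [pairing_eq_dotProduct, smul_dotProduct, smul_eq_mul]
    exact mul_nonneg hc (hu v hv)

theorem convex_dualCone (σ : Set (Fin n → ℝ)) : Convex ℝ (dualCone σ) :=
  fun u hu u' hu' a b ha hb _ v hv => by
    rw [pairing_eq_dotProduct, add_dotProduct, smul_dotProduct, smul_dotProduct]
    exact add_nonneg (mul_nonneg ha (hu v hv)) (mul_nonneg hb (hu' v hv))

/-- The paper's `Q_ξ` is `dualSlice σ ξ 1`, and `m Q_ξ` is `dualSlice σ ξ m`. -/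
def dualSlice (σ : Set (Fin n → ℝ)) (ξ : Fin n → ℝ) (c : ℝ) : Set (Fin n → ℝ) :=
  {u | u ∈ dualCone σ ∧ pairing u ξ ≤ c}

theorem smul_mem_dualSlice {a c : ℝ} (hc : 0 ≤ c) (hu : u ∈ dualSlice σ ξ a) :
    c • u ∈ dualSlice σ ξ (c * a) := by
  refine ⟨smul_mem_dualCone hc hu.1, ?_⟩
  rw [pairing_eq_dotProduct, smul_dotProduct, smul_eq_mul]
  exact mul_le_mul_of_nonneg_left hu.2 hc

theorem dualSlice_subset_smul {c : ℝ} (hc : 0 < c) : dualSlice σ ξ c ⊆ c • dualSlice σ ξ 1 :=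
  fun u hu => (mem_smul_set_iff_inv_smul_mem₀ hc.ne' _ _).2 <| by
    simpa [inv_mul_cancel₀ hc.ne'] using smul_mem_dualSlice (inv_nonneg.2 hc.le) hu

theorem convex_dualSlice (σ : Set (Fin n → ℝ)) (ξ : Fin n → ℝ) (c : ℝ) :
    Convex ℝ (dualSlice σ ξ c) :=
  (convex_dualCone σ).inter (convex_halfSpace_le (dotProductBilin ℝ ℝ |>.flip ξ).isLinear c)

theorem isClosed_dualSlice (σ : Set (Fin n → ℝ)) (ξ : Fin n → ℝ) (c : ℝ) :
    IsClosed (dualSlice σ ξ c) :=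
  (isClosed_dualCone σ).inter
    (isClosed_le (continuous_id.dotProduct continuous_const) continuous_const)

theorem abs_pairing_le_of_mem_dualCone {v : Fin n → ℝ} (hu : u ∈ dualCone σ)
    (hplus : ξ + v ∈ σ) (hminus : ξ - v ∈ σ) : |pairing u v| ≤ pairing u ξ := by
  have h₁ := hu _ hplus
  have h₂ := hu _ hminus
  rw [pairing_eq_dotProduct, dotProduct_add] at h₁
  rw [pairing_eq_dotProduct, dotProduct_sub] at h₂
  rw [pairing_eq_dotProduct, pairing_eq_dotProduct]
  exact abs_le.2 ⟨by linarith, by linarith⟩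

theorem isBounded_dualSlice (hξ : ξ ∈ interior σ) (c : ℝ) :
    Bornology.IsBounded (dualSlice σ ξ c) := by
  obtain ⟨ε, hε, hball⟩ := Metric.mem_nhds_iff.1 (mem_interior_iff_mem_nhds.1 hξ)
  have hmem : ∀ v : Fin n → ℝ, ‖v‖ < ε → ξ + v ∈ σ := fun v hv =>
    hball (by simpa [dist_eq_norm] using hv)
  refine isBounded_iff_forall_norm_le.2 ⟨|c| / (ε / 2), fun u hu =>
    (pi_norm_le_iff_of_nonneg (by positivity)).2 fun i => ?_⟩
  have hsingle : ‖(Pi.single i (ε / 2) : Fin n → ℝ)‖ < ε := by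
    rw [Pi.norm_single, Real.norm_of_nonneg (by positivity)]; linarith
  have h := abs_pairing_le_of_mem_dualCone hu.1 (hmem _ hsingle)
    (by simpa [sub_eq_add_neg] using hmem _ (by rwa [norm_neg]))
  rw [pairing_eq_dotProduct, dotProduct_single, abs_mul, abs_of_pos (half_pos hε)] at h
  rw [Real.norm_eq_abs, le_div_iff₀ (half_pos hε)]
  exact h.trans (hu.2.trans (le_abs_self c))

theorem isCompact_dualSlice (hξ : ξ ∈ interior σ) (c : ℝ) : IsCompact (dualSlice σ ξ c) :=
  Metric.isCompact_of_isClosed_isBounded (isClosed_dualSlice σ ξ c) (isBounded_dualSlice hξ c)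

end DualCone

section Rational

variable {n : ℕ} {σ : Set (Fin n → ℝ)} {ξ : Fin n → ℝ}

theorem dualCone_eq_ratDualCone {s : Finset (Fin n → ℤ)}
    (hσ : σ = {x | ∃ c : (Fin n → ℤ) → ℝ, (∀ g ∈ s, 0 ≤ c g) ∧
      x = ∑ g ∈ s, c g • (fun i => (g i : ℝ))}) :
    dualCone σ = ratDualCone ((fun g i => (g i : ℚ)) '' (s : Set (Fin n → ℤ))) := by
  classical
  ext u
  simp only [dualCone, ratDualCone, hσ, mem_ofPred_eq, forall_mem_image, Finset.mem_coe,
    Rat.cast_intCast, pairing_eq_dotProduct]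
  constructor
  · intro hu g hg
    rw [dotProduct_comm]
    refine hu _ ⟨Pi.single g 1, fun g' _ => ?_, ?_⟩
    · by_cases h : g' = g <;> simp [h]
    · simp [Pi.single_apply, ite_smul, hg]
  · rintro hu _ ⟨c, hc, rfl⟩
    rw [dotProduct_sum]
    exact Finset.sum_nonneg fun g hg => by
      rw [dotProduct_smul, smul_eq_mul, dotProduct_comm]
      exact mul_nonneg (hc g hg) (hu hg)

theorem dualSlice_subset_closure_ratPoints_inter
    (hdense : dualCone σ ⊆ closure (ratPoints (Fin n) ∩ dualCone σ)) :
    dualSlice σ ξ 1 ⊆ closure (ratPoints (Fin n) ∩ dualSlice σ ξ 1) := by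
  have h_open : IsOpen {u : Fin n → ℝ | pairing u ξ < 1} :=
    isOpen_lt (f := fun u => pairing u ξ) (continuous_id.dotProduct continuous_const)
      continuous_const
  have h_shrink : dualSlice σ ξ 1 ⊆ closure (dualCone σ ∩ {u | pairing u ξ < 1}) := by
    intro u hu
    have hlim : Tendsto (fun c : ℝ => c • u) (𝓝[<] 1) (𝓝 u) :=
      tendsto_nhdsWithin_of_tendsto_nhds <|
        (continuous_id.smul continuous_const).tendsto' 1 u (one_smul ℝ u)
    refine mem_closure_of_tendsto hlim ?_
    filter_upwards [Ioo_mem_nhdsLT one_pos] with c hc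
    obtain ⟨hcu, hcξ⟩ := smul_mem_dualSlice hc.1.le hu
    exact ⟨hcu, hcξ.trans_lt (by simpa using hc.2)⟩
  refine h_shrink.trans (closure_minimal ?_ isClosed_closure)
  rintro u ⟨hu, hlt⟩
  refine closure_mono ?_ (h_open.closure_inter ⟨hdense hu, hlt⟩)
  exact fun v ⟨⟨hv_rat, hv⟩, hv_lt⟩ => ⟨hv_rat, hv, hv_lt.le⟩

theorem exists_pos_isLatticePoint_smul {u : Fin n → ℝ} (hu : u ∈ ratPoints (Fin n)) :
    ∃ d : ℕ, 0 < d ∧ isLatticePoint ((d : ℝ) • u) := by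
  obtain ⟨q, rfl⟩ := hu
  refine ⟨∏ i, (q i).den, Finset.prod_pos fun i _ => (q i).pos, ?_⟩
  choose k hk using fun i => Finset.dvd_prod_of_mem (fun j => (q j).den) (Finset.mem_univ i)
  refine ⟨fun i => k i * (q i).num, funext fun i => ?_⟩
  have hnum : (q i : ℝ) * (q i).den = (q i).num := by exact_mod_cast Rat.mul_den_eq_num (q i)
  simp only [Pi.smul_apply, smul_eq_mul, hk i]
  push_cast
  linear_combination (k i : ℝ) * hnum

end Rational

section Okounkov

variable {n : ℕ} {σ : Set (Fin n → ℝ)} {ξ : Fin n → ℝ}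
  {F : Type*} [AddCommGroup F] [Module ℝ F] (f : (Fin n → ℝ) →ₗ[ℝ] F)

theorem smul_convexHull_image_subset {c : ℝ} (hc : 0 < c) :
    (1 / c) • convexHull ℝ (f '' {u | isLatticePoint u ∧ u ∈ dualCone σ ∧ pairing u ξ ≤ c})
      ⊆ f '' dualSlice σ ξ 1 := by
  rw [smul_set_subset_iff₀ (by positivity), one_div, inv_inv]
  refine convexHull_min ?_ (((convex_dualSlice σ ξ 1).linear_image f).smul c)
  rw [← image_smul_set]
  exact image_mono fun u hu => dualSlice_subset_smul hc hu.2

theorem mem_iUnion_smul_convexHull_image {u : Fin n → ℝ}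
    (hu : u ∈ ratPoints (Fin n) ∩ dualSlice σ ξ 1) :
    f u ∈ ⋃ m : ℕ, (1 / ((m : ℝ) + 1)) • convexHull ℝ
      (f '' {u | isLatticePoint u ∧ u ∈ dualCone σ ∧ pairing u ξ ≤ (m : ℝ) + 1}) := by
  obtain ⟨d, hd, hlat⟩ := exists_pos_isLatticePoint_smul hu.1
  have hd_cast : ((d - 1 : ℕ) : ℝ) + 1 = d := by
    rw [Nat.cast_sub hd, Nat.cast_one, sub_add_cancel]
  have hdu := smul_mem_dualSlice (Nat.cast_nonneg d) hu.2
  rw [mul_one] at hdu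
  have hfu : f u = (1 / (d : ℝ)) • f ((d : ℝ) • u) := by
    rw [map_smul, smul_smul, one_div_mul_cancel (by positivity), one_smul]
  refine mem_iUnion.2 ⟨d - 1, ?_⟩
  rw [hd_cast, hfu]
  exact smul_mem_smul_set (subset_convexHull ℝ _ (mem_image_of_mem f ⟨hlat, hdu⟩))

end Okounkov

theorem toric_okounkov_body_eq_general {n : ℕ}
    (σ : Set (Fin n → ℝ))
    (hσpoly : ∃ s : Finset (Fin n → ℤ),
      σ = {x | ∃ c : (Fin n → ℤ) → ℝ, (∀ g ∈ s, 0 ≤ c g) ∧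
        x = ∑ g ∈ s, c g • (fun i => (g i : ℝ))})
    (ξ : Fin n → ℝ) (hξ : ξ ∈ interior σ)
    (e : Fin n → (Fin n → ℝ)) :
    closure (⋃ m : ℕ,
        (1 / ((m : ℝ) + 1)) • convexHull ℝ
          ((fun u => fun i => pairing u (e i)) ''
            {u | isLatticePoint u ∧ u ∈ dualCone σ ∧ pairing u ξ ≤ (m : ℝ) + 1}))
      = (fun u => fun i => pairing u (e i)) ''
          {u | u ∈ dualCone σ ∧ pairing u ξ ≤ 1} := by
  obtain ⟨s, hσ⟩ := hσpoly
  let ι := (Matrix.of e).mulVecLin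
  have hι : (fun u => fun i => pairing u (e i)) = ι :=
    funext fun u => funext fun i => dotProduct_comm u (e i)
  have hι_cont : Continuous ι := ι.continuous_of_finiteDimensional
  have hdense : dualCone σ ⊆ closure (ratPoints (Fin n) ∩ dualCone σ) := by
    rw [dualCone_eq_ratDualCone hσ]
    exact ratDualCone_subset_closure_ratPoints_inter ((s.finite_toSet).image _)
  change _ = _ '' dualSlice σ ξ 1
  rw [hι]
  refine Subset.antisymm (closure_minimal (iUnion_subset fun m =>
    smul_convexHull_image_subset ι (by positivity))
    ((isCompact_dualSlice hξ 1).image hι_cont).isClosed) ?_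
  calc ι '' dualSlice σ ξ 1
      ⊆ ι '' closure (ratPoints (Fin n) ∩ dualSlice σ ξ 1) :=
        image_mono (dualSlice_subset_closure_ratPoints_inter hdense)
    _ ⊆ closure (ι '' (ratPoints (Fin n) ∩ dualSlice σ ξ 1)) :=
        image_closure_subset_closure_image hι_cont
    _ ⊆ _ := closure_mono (image_subset_iff.2 fun u hu =>
        mem_preimage.2 (mem_iUnion_smul_convexHull_image ι hu))

/-- For an affine toric variety with Reeb vector `ξ ∈ int σ`, the
Okounkov body `Δ = closure ⋃_m (1/m)·Conv(ι(m Q_ξ ∩ M))` with respect to the flag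
valuation determined by a basis `e_1,…,e_n ∈ σ` of determinant one equals `ι(Q_ξ)`,
where `Q_ξ = {u ∈ σ^∨ : ⟨u,ξ⟩ ≤ 1}` and `ι u = (⟨u,e_1⟩,…,⟨u,e_n⟩)`. -/
theorem toric_okounkov_body_eq {n : ℕ} (hn : 1 ≤ n)
    (σ : Set (Fin n → ℝ))
    (hσpoly : ∃ s : Finset (Fin n → ℤ),
      σ = {x | ∃ c : (Fin n → ℤ) → ℝ, (∀ g ∈ s, 0 ≤ c g) ∧
        x = ∑ g ∈ s, c g • (fun i => (g i : ℝ))})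
    (ξ : Fin n → ℝ) (hξ : ξ ∈ interior σ)
    (e : Fin n → (Fin n → ℝ)) (he : ∀ i, e i ∈ σ)
    (hdet : Matrix.det (Matrix.of fun i j => e i j) = 1) :
    closure (⋃ m : ℕ,
        (1 / ((m : ℝ) + 1)) • convexHull ℝ
          ((fun u => fun i => pairing u (e i)) ''
            {u | isLatticePoint u ∧ u ∈ dualCone σ ∧ pairing u ξ ≤ (m : ℝ) + 1}))
      = (fun u => fun i => pairing u (e i)) ''
          {u | u ∈ dualCone σ ∧ pairing u ξ ≤ 1} :=
  toric_okounkov_body_eq_general σ hσpoly ξ hξ e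

end
end

section
/- Let f ∈ K[[z_1,...,z_n]] with expansion f = Σ_β a_β z^β, and let β₀ ∈ N^n be the minimum of {β : a_β ≠ 0} in lexicographic order (in the precise sense of the flag valuation v, so v(f) = β₀). Define C_f = {t ∈ R^n_{≥0} : t_i ≥ Σ_{j>i} β_{0j} t_j for 1 ≤ i ≤ n−1}. Then for every t ∈ C_f we have w_t(f) = β₀ · t, where w_t(f) = min{β·t : a_β ≠ 0} is the monomial valuation with weights t. -/
/-!
If `β₀ <_lex β` first differ at index `i`, then `β · t - β₀ · t` gains at least `t i` at
index `i`, loses at most `∑_{j>i} β₀ j * t j` after it, and nothing before it; the cone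
condition makes the gain dominate, so `β₀` attains the infimum.
-/

open Finset

theorem Finset.sum_univ_eq_sum_lt_add_add_sum_gt {ι M : Type*} [Fintype ι] [LinearOrder ι]
    [AddCommMonoid M] (g : ι → M) (i : ι) :
    ∑ j, g j =
      ∑ j ∈ univ.filter (· < i), g j + g i + ∑ j ∈ univ.filter (i < ·), g j := by
  have hge : univ.filter (fun j => ¬ j < i) = insert i (univ.filter (i < ·)) := by
    ext j
    simp [le_iff_eq_or_lt, eq_comm]
  rw [← sum_filter_add_sum_filter_not univ (· < i), hge, sum_insert (by simp), add_assoc]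

theorem weightedSum_le_of_toLex_le {ι : Type*} [Fintype ι] [LinearOrder ι]
    (α β : ι →₀ ℕ) (t : ι → ℝ) (ht0 : ∀ i, 0 ≤ t i)
    (htC : ∀ i, ∑ j ∈ univ.filter (i < ·), (α j : ℝ) * t j ≤ t i)
    (h : toLex α ≤ toLex β) :
    ∑ i, (α i : ℝ) * t i ≤ ∑ i, (β i : ℝ) * t i := by
  rcases h.eq_or_lt with heq | hlt
  · rw [toLex_inj.mp heq]
  obtain ⟨i, hagree, hi⟩ : ∃ i, (∀ j < i, α j = β j) ∧ α i < β i :=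
    Finsupp.lex_def.mp hlt
  rw [sum_univ_eq_sum_lt_add_add_sum_gt _ i, sum_univ_eq_sum_lt_add_add_sum_gt _ i]
  have hprefix : ∑ j ∈ univ.filter (· < i), (α j : ℝ) * t j
      = ∑ j ∈ univ.filter (· < i), (β j : ℝ) * t j :=
    sum_congr rfl fun j hj => by rw [hagree j (mem_filter.mp hj).2]
  have hgain : ((α i : ℝ) + 1) * t i ≤ β i * t i :=
    mul_le_mul_of_nonneg_right (by exact_mod_cast hi) (ht0 i)
  have htail : 0 ≤ ∑ j ∈ univ.filter (i < ·), (β j : ℝ) * t j :=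
    sum_nonneg fun j _ => mul_nonneg (Nat.cast_nonneg _) (ht0 j)
  linarith [htC i]

/-- Let `f ∈ K⟦z_1,…,z_n⟧` and let `β₀` be the lex-minimal exponent
of `f` (the value of the flag valuation). On the cone
`C_f = {t ≥ 0 : t_i ≥ Σ_{j>i} β₀_j t_j}` the monomial valuation with weights `t`
satisfies `w_t(f) = β₀ · t`. -/
theorem monomial_valuation_eq_on_cone {n : ℕ} {K : Type*} [Field K]
    (f : MvPowerSeries (Fin n) K)
    (β₀ : Fin n →₀ ℕ)
    (hmem : MvPowerSeries.coeff β₀ f ≠ 0)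
    (hlexmin : ∀ β : Fin n →₀ ℕ, MvPowerSeries.coeff β f ≠ 0 →
      toLex β₀ ≤ toLex β)
    (t : Fin n → ℝ) (ht0 : ∀ i, 0 ≤ t i)
    (htC : ∀ i : Fin n,
      (∑ j ∈ Finset.univ.filter (fun j => i < j), (β₀ j : ℝ) * t j) ≤ t i) :
    sInf {r : ℝ | ∃ β : Fin n →₀ ℕ, MvPowerSeries.coeff β f ≠ 0 ∧
        r = ∑ i, (β i : ℝ) * t i}
      = ∑ i, (β₀ i : ℝ) * t i := by
  refine IsLeast.csInf_eq ⟨⟨β₀, hmem, rfl⟩, ?_⟩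
  rintro r ⟨β, hβ, rfl⟩
  exact weightedSum_le_of_toLex_le β₀ β t ht0 htC (hlexmin β hβ)
end

section
/- Let S: C → R be a function on an open convex cone C ⊂ R^n that is nonincreasing with respect to the partial order induced by Λ ⊂ (R^n)^* (i.e., S(ξ') ≤ S(ξ) whenever ⟨α, ξ' − ξ⟩ > 0 for all α ∈ Λ) and homogeneous of degree −1 (S(tξ) = t^{-1}S(ξ) for t > 0). Then S is continuous on C. -/
/-!
For `t > 1` and `η` close enough to `ξ`, both `t • ξ - η` and `η - t⁻¹ • ξ` lie in the open
cone `C`, so monotonicity squeezes `S η` between `S (t • ξ) = t⁻¹ * S ξ` and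
`S (t⁻¹ • ξ) = t * S ξ`; letting `t → 1` gives continuity at `ξ`.
-/

open Filter Topology Set

theorem tendsto_of_eventually_mem_Icc {α ι β : Type*} [TopologicalSpace β] [LinearOrder β]
    [OrderTopology β] {l : Filter α} {k : Filter ι} [k.NeBot] {f : α → β} {lo hi : ι → β}
    {c : β} (hlo : Tendsto lo k (𝓝 c)) (hhi : Tendsto hi k (𝓝 c))
    (h : ∀ᶠ i in k, ∀ᶠ x in l, f x ∈ Icc (lo i) (hi i)) : Tendsto f l (𝓝 c) := by
  refine tendsto_order.2 ⟨fun a ha => ?_, fun b hb => ?_⟩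
  · obtain ⟨i, hai, hi⟩ := ((hlo.eventually (lt_mem_nhds ha)).and h).exists
    filter_upwards [hi] with x hx using hai.trans_le hx.1
  · obtain ⟨i, hib, hi⟩ := ((hhi.eventually (gt_mem_nhds hb)).and h).exists
    filter_upwards [hi] with x hx using hx.2.trans_lt hib

theorem tendsto_apply_smul_nhds_one {E : Type*} [SMul ℝ E] {S : E → ℝ} {ξ : E}
    (hhom : ∀ t : ℝ, 0 < t → S (t • ξ) = t⁻¹ * S ξ) :
    Tendsto (fun t : ℝ => S (t • ξ)) (𝓝 1) (𝓝 (S ξ)) := by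
  have hlim : Tendsto (fun t : ℝ => t⁻¹ * S ξ) (𝓝 1) (𝓝 (S ξ)) := by
    simpa using (tendsto_inv₀ one_ne_zero).mul_const (S ξ)
  refine hlim.congr' ?_
  filter_upwards [lt_mem_nhds one_pos] with t ht using (hhom t ht).symm

section Cone

variable {E : Type*} [AddCommGroup E] [Module ℝ E] [TopologicalSpace E]
  [IsTopologicalAddGroup E] {C : Set E}

theorem eventually_smul_add_sub_mem (hCo : IsOpen C)
    (hcone : ∀ t : ℝ, 0 < t → ∀ x ∈ C, t • x ∈ C) {ξ : E} (hξ : ξ ∈ C) {s : ℝ} (hs : 0 < s) :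
    ∀ᶠ η in 𝓝 ξ, s • ξ + (η - ξ) ∈ C ∧ s • ξ + (ξ - η) ∈ C := by
  have hmem : C ∈ 𝓝 (s • ξ) := hCo.mem_nhds (hcone s hs ξ hξ)
  have h₁ := (by fun_prop : Continuous fun η => s • ξ + (η - ξ)).tendsto' ξ (s • ξ) (by simp)
  have h₂ := (by fun_prop : Continuous fun η => s • ξ + (ξ - η)).tendsto' ξ (s • ξ) (by simp)
  exact (h₁.eventually_mem hmem).and (h₂.eventually_mem hmem)

theorem continuousOn_of_antitone_of_homogeneous (hCo : IsOpen C)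
    (hcone : ∀ t : ℝ, 0 < t → ∀ x ∈ C, t • x ∈ C) {S : E → ℝ}
    (hmono : ∀ ξ ∈ C, ∀ ξ' ∈ C, ξ' - ξ ∈ C → S ξ' ≤ S ξ)
    (hhom : ∀ ξ ∈ C, ∀ t : ℝ, 0 < t → S (t • ξ) = t⁻¹ * S ξ) : ContinuousOn S C := by
  intro ξ hξ
  have hsandwich : ∀ᶠ t in 𝓝[>] (1 : ℝ), ∀ᶠ η in 𝓝[C] ξ,
      S η ∈ Icc (S (t • ξ)) (S (t⁻¹ • ξ)) := by
    filter_upwards [self_mem_nhdsWithin] with t (ht : 1 < t)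
    have ht₀ : 0 < t := one_pos.trans ht
    filter_upwards [nhdsWithin_le_nhds (eventually_smul_add_sub_mem hCo hcone hξ (sub_pos.2 ht)),
      nhdsWithin_le_nhds (eventually_smul_add_sub_mem hCo hcone hξ
        (sub_pos.2 (inv_lt_one_of_one_lt₀ ht))),
      self_mem_nhdsWithin] with η ⟨_, hup⟩ ⟨hlow, _⟩ hη
    refine ⟨hmono η hη _ (hcone t ht₀ ξ hξ) ?_, hmono _ (hcone t⁻¹ (inv_pos.2 ht₀) ξ hξ) η hη ?_⟩
    · convert hup using 1
      module
    · convert hlow using 1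
      module
  have hlim := tendsto_apply_smul_nhds_one (hhom ξ hξ)
  have hinv : Tendsto (fun t : ℝ => t⁻¹) (𝓝[>] 1) (𝓝 1) := by
    simpa using (tendsto_inv₀ (one_ne_zero (α := ℝ))).mono_left nhdsWithin_le_nhds
  exact tendsto_of_eventually_mem_Icc (hlim.mono_left nhdsWithin_le_nhds) (hlim.comp hinv)
    hsandwich

end Cone

theorem monotone_homogeneous_continuous_general {n : ℕ}
    (Λ : Set ((Fin n → ℝ) →ₗ[ℝ] ℝ))
    (C : Set (Fin n → ℝ))
    (hC : C = {ξ | ∀ α ∈ Λ, 0 < α ξ})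
    (hCopen : IsOpen C)
    (S : (Fin n → ℝ) → ℝ)
    (hmono : ∀ ξ ∈ C, ∀ ξ' ∈ C, (∀ α ∈ Λ, 0 < α (ξ' - ξ)) → S ξ' ≤ S ξ)
    (hhom : ∀ ξ ∈ C, ∀ t : ℝ, 0 < t → S (t • ξ) = t⁻¹ * S ξ) :
    ContinuousOn S C := by
  subst hC
  refine continuousOn_of_antitone_of_homogeneous hCopen ?_ hmono hhom
  intro t ht x hx α hα
  simpa only [map_smul, smul_eq_mul] using mul_pos ht (hx α hα)

/-- A function `S` on an open convex cone
`C = {ξ : ⟨α,ξ⟩ > 0 ∀ α ∈ Λ}` which is nonincreasing for the order induced by `Λ`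
and homogeneous of degree `-1` is continuous on `C`. -/
theorem monotone_homogeneous_continuous {n : ℕ}
    (Λ : Set ((Fin n → ℝ) →ₗ[ℝ] ℝ))
    (C : Set (Fin n → ℝ))
    (hC : C = {ξ | ∀ α ∈ Λ, 0 < α ξ})
    (hCopen : IsOpen C)
    (hCconv : Convex ℝ C)
    (hCne : C.Nonempty)
    (S : (Fin n → ℝ) → ℝ)
    (hmono : ∀ ξ ∈ C, ∀ ξ' ∈ C, (∀ α ∈ Λ, 0 < α (ξ' - ξ)) → S ξ' ≤ S ξ)
    (hhom : ∀ ξ ∈ C, ∀ t : ℝ, 0 < t → S (t • ξ) = t⁻¹ * S ξ) :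
    ContinuousOn S C :=
  monotone_homogeneous_continuous_general Λ C hC hCopen S hmono hhom
end
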